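/- arXiv:1910.04789 — 9 statements merged into one kernel-verified Lean document; each statement's English description precedes it below -/
import Mathlib

section
/- Let g be a Lie algebra over a commutative ring R, and let k and b be Lie subalgebras of g whose underlying submodules are complementary (g = k ⊕ b as R-modules). Let M : g → g be the R-linear projection onto k along b. Then M satisfies the Nijenhuis equation: for all X, Y ∈ g, M(M⁅X,Y⁆) − M⁅M X, Y⁆ − M⁅X, M Y⁆ + ⁅M X, M Y⁆ = 0. -/
/-- **Nijenhuis equation for the projection onto a Lie subalgebra along a complementary
Lie subalgebra.** If `g = k ⊕ b` as `R`-modules, with `k`, `b` Lie subalgebras of `g`, and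
`M : g → g` is the linear projection onto `k` along `b`, then
`M(M⁅X,Y⁆) − M⁅M X, Y⁆ − M⁅X, M Y⁆ + ⁅M X, M Y⁆ = 0` for all `X, Y`. -/
theorem nijenhuis_of_projection_onto_subalgebra
    {R : Type*} [CommRing R] {g : Type*} [LieRing g] [LieAlgebra R g]
    (k b : LieSubalgebra R g)
    (hcompl : IsCompl (k.toSubmodule) (b.toSubmodule))
    (M : g →ₗ[R] g)
    (hMM : M ∘ₗ M = M)
    (hrange : LinearMap.range M = k.toSubmodule)
    (hker : LinearMap.ker M = b.toSubmodule) :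
    ∀ X Y : g,
      M (M ⁅X, Y⁆) - M ⁅M X, Y⁆ - M ⁅X, M Y⁆ + ⁅M X, M Y⁆ = 0 := by
  intro X Y
  have hMM' : ∀ z : g, M (M z) = M z := fun z => LinearMap.congr_fun hMM z
  have hfix : ∀ x : g, x ∈ k.toSubmodule → M x = x := by
    intro x hx
    rw [← hrange] at hx
    obtain ⟨y, rfl⟩ := hx
    exact hMM' y
  have hkill : ∀ x : g, x ∈ b.toSubmodule → M x = 0 := by
    intro x hx
    rw [← hker] at hx
    exact hx
  have hXk : M X ∈ k.toSubmodule := hrange ▸ LinearMap.mem_range_self M X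
  have hYk : M Y ∈ k.toSubmodule := hrange ▸ LinearMap.mem_range_self M Y
  have hXb : X - M X ∈ b.toSubmodule := by
    rw [← hker]; simp [LinearMap.mem_ker, map_sub, hMM' X]
  have hYb : Y - M Y ∈ b.toSubmodule := by
    rw [← hker]; simp [LinearMap.mem_ker, map_sub, hMM' Y]
  have h1 : M ⁅M X, M Y⁆ = ⁅M X, M Y⁆ := hfix _ (k.lie_mem hXk hYk)
  have h2 : M ⁅X - M X, Y - M Y⁆ = 0 := hkill _ (b.lie_mem hXb hYb)
  have hdecomp : ⁅X, Y⁆ =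
      ⁅M X, M Y⁆ + ⁅M X, Y - M Y⁆ + ⁅X - M X, M Y⁆ + ⁅X - M X, Y - M Y⁆ := by
    simp only [lie_sub, sub_lie]
    abel
  have hMXY : M ⁅X, Y⁆ =
      ⁅M X, M Y⁆ + M ⁅M X, Y - M Y⁆ + M ⁅X - M X, M Y⁆ := by
    rw [hdecomp]; simp only [map_add, h1, h2, add_zero]
  have hMX : M ⁅M X, Y⁆ = ⁅M X, M Y⁆ + M ⁅M X, Y - M Y⁆ := by
    have : ⁅M X, Y⁆ = ⁅M X, M Y⁆ + ⁅M X, Y - M Y⁆ := by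
      simp only [lie_sub]; abel
    rw [this, map_add, h1]
  have hMY : M ⁅X, M Y⁆ = ⁅M X, M Y⁆ + M ⁅X - M X, M Y⁆ := by
    have : ⁅X, M Y⁆ = ⁅M X, M Y⁆ + ⁅X - M X, M Y⁆ := by
      simp only [sub_lie]; abel
    rw [this, map_add, h1]
  rw [hMM' ⁅X, Y⁆, hMXY, hMX, hMY]
  abel
end

section
/- Let M be the projection of gl_n(ℝ) onto skew-symmetric matrices along lower triangular matrices, given entrywise by M(A)_{ij} = A_{ij} for i < j, M(A)_{ij} = −A_{ji} for i > j, and M(A)_{ii} = 0. Then for all n×n real matrices A and B, M(⁅A,B⁆) = M(⁅M(A), B⁆) + M(⁅A, M(B)⁆) − ⁅M(A), M(B)⁆, where ⁅A,B⁆ = AB − BA is the matrix commutator. -/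
open Matrix

/-- The Toda projection: `M(A)_{ij} = A_{ij}` for `i < j`, `M(A)_{ij} = -A_{ji}` for
`i > j`, and `M(A)_{ii} = 0`. -/
def todaProj {n : ℕ} (A : Matrix (Fin n) (Fin n) ℝ) : Matrix (Fin n) (Fin n) ℝ :=
  Matrix.of fun i j => if i < j then A i j else if j < i then -A j i else 0

lemma todaProj_add {n : ℕ} (X Y : Matrix (Fin n) (Fin n) ℝ) :
    todaProj (X + Y) = todaProj X + todaProj Y := by
  ext i j
  simp only [todaProj, Matrix.of_apply, Matrix.add_apply]
  split_ifs <;> ring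

lemma todaProj_sub {n : ℕ} (X Y : Matrix (Fin n) (Fin n) ℝ) :
    todaProj (X - Y) = todaProj X - todaProj Y := by
  ext i j
  simp only [todaProj, Matrix.of_apply, Matrix.sub_apply]
  split_ifs <;> ring

lemma todaProj_of_lower {n : ℕ} (Z : Matrix (Fin n) (Fin n) ℝ)
    (h : ∀ i j, i < j → Z i j = 0) : todaProj Z = 0 := by
  ext i j
  simp only [todaProj, Matrix.of_apply, Matrix.zero_apply]
  split_ifs with h1 h2
  · exact h i j h1
  · simp [h j i h2]
  · rfl

lemma todaProj_of_skew {n : ℕ} (Z : Matrix (Fin n) (Fin n) ℝ)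
    (h : ∀ i j, Z j i = -Z i j) : todaProj Z = Z := by
  ext i j
  simp only [todaProj, Matrix.of_apply]
  rcases lt_trichotomy i j with h1 | h1 | h1
  · simp [h1]
  · subst h1
    have := h i i
    simp only [if_neg (lt_irrefl i)]
    linarith
  · rw [if_neg (not_lt.2 h1.le), if_pos h1, h j i]

lemma todaProj_skew {n : ℕ} (A : Matrix (Fin n) (Fin n) ℝ) :
    ∀ i j, todaProj A j i = -todaProj A i j := by
  intro i j
  simp only [todaProj, Matrix.of_apply]
  rcases lt_trichotomy i j with h1 | h1 | h1
  · rw [if_neg (not_lt.2 h1.le), if_pos h1, if_pos h1]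
  · subst h1; simp
  · rw [if_pos h1, if_neg (not_lt.2 h1.le), if_pos h1, neg_neg]

lemma comm_skew {n : ℕ} (X Y : Matrix (Fin n) (Fin n) ℝ)
    (hX : ∀ i j, X j i = -X i j) (hY : ∀ i j, Y j i = -Y i j) :
    ∀ i j, (X * Y - Y * X) j i = -(X * Y - Y * X) i j := by
  intro i j
  simp only [Matrix.sub_apply, Matrix.mul_apply]
  rw [← Finset.sum_sub_distrib, ← Finset.sum_sub_distrib, ← Finset.sum_neg_distrib]
  apply Finset.sum_congr rfl
  intro k _
  rw [hX j k, hY k i, hY j k, hX k i]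
  ring

lemma lower_sub_proj {n : ℕ} (A : Matrix (Fin n) (Fin n) ℝ) :
    ∀ i j, i < j → (A - todaProj A) i j = 0 := by
  intro i j h
  simp [todaProj, Matrix.sub_apply, if_pos h]

lemma comm_lower {n : ℕ} (X Y : Matrix (Fin n) (Fin n) ℝ)
    (hX : ∀ i j, i < j → X i j = 0) (hY : ∀ i j, i < j → Y i j = 0) :
    ∀ i j, i < j → (X * Y - Y * X) i j = 0 := by
  intro i j h
  simp only [Matrix.sub_apply, Matrix.mul_apply]
  have h1 : ∀ k, X i k * Y k j = 0 := by
    intro k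
    rcases lt_or_ge i k with hk | hk
    · rw [hX i k hk, zero_mul]
    · rw [hY k j (lt_of_le_of_lt hk h), mul_zero]
  have h2 : ∀ k, Y i k * X k j = 0 := by
    intro k
    rcases lt_or_ge i k with hk | hk
    · rw [hY i k hk, zero_mul]
    · rw [hX k j (lt_of_le_of_lt hk h), mul_zero]
  simp [h1, h2]

/-- The Nijenhuis equation for the Toda projection of `gl_n(ℝ)` onto skew-symmetric
matrices along lower triangular matrices, with `⁅A,B⁆ = A*B - B*A`. -/
theorem todaProj_nijenhuis {n : ℕ} (A B : Matrix (Fin n) (Fin n) ℝ) :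
    todaProj (A * B - B * A) =
      todaProj (todaProj A * B - B * todaProj A)
        + todaProj (A * todaProj B - todaProj B * A)
        - (todaProj A * todaProj B - todaProj B * todaProj A) := by
  set MA := todaProj A with hMA
  set MB := todaProj B with hMB
  have key : A * B - B * A =
      (MA * B - B * MA) + (A * MB - MB * A) - (MA * MB - MB * MA)
        + ((A - MA) * (B - MB) - (B - MB) * (A - MA)) := by
    noncomm_ring
  rw [key, todaProj_add, todaProj_sub, todaProj_add,
    todaProj_of_lower _ (comm_lower _ _ (lower_sub_proj A) (lower_sub_proj B)),
    todaProj_of_skew _ (comm_skew MA MB (todaProj_skew A) (todaProj_skew B))]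
  exact add_zero _
end

section
/- Let M be defined on n×n real matrices entrywise by M(A)_{ij} = A_{ij} for i < j, M(A)_{ij} = −A_{ji} for i > j, and M(A)_{ii} = 0. Then for all symmetric n×n real matrices X and Y (Xᵀ = X, Yᵀ = Y), one has ⁅X,Y⁆ = M(⁅M(X), Y⁆) + M(⁅X, M(Y)⁆) − ⁅M(X), M(Y)⁆, where ⁅A,B⁆ = AB − BA. -/
open Matrix

/-!
Split `X = M(X) + L` and `Y = M(Y) + L'`; for any `X` the remainder `L = X - M(X)` is lower
triangular. Expanding the brackets gives
`⁅M X, Y⁆ + ⁅X, M Y⁆ - ⁅M X, M Y⁆ = ⁅X, Y⁆ - ⁅L, L'⁆`.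
Now apply the linear map `M`: it fixes the skew-symmetric matrices `⁅X, Y⁆` (as `X`, `Y` are
symmetric) and `⁅M X, M Y⁆`, and it kills the lower triangular matrix `⁅L, L'⁆`.
-/

section Commutator

variable {ι R : Type*} [Fintype ι] [CommRing R] {A B : Matrix ι ι R}

theorem transpose_commutator_of_transpose_eq_self (hA : Aᵀ = A) (hB : Bᵀ = B) :
    (A * B - B * A)ᵀ = -(A * B - B * A) := by
  rw [transpose_sub, transpose_mul, transpose_mul, hA, hB, neg_sub]

theorem transpose_commutator_of_transpose_eq_neg (hA : Aᵀ = -A) (hB : Bᵀ = -B) :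
    (A * B - B * A)ᵀ = -(A * B - B * A) := by
  rw [transpose_sub, transpose_mul, transpose_mul, hA, hB, neg_mul_neg, neg_mul_neg, neg_sub]

end Commutator

section TodaProj

variable {n : ℕ} (A B : Matrix (Fin n) (Fin n) ℝ)

theorem todaProj_add_s4 : todaProj (A + B) = todaProj A + todaProj B := by
  ext i j
  simp only [todaProj, of_apply, Matrix.add_apply]
  split_ifs <;> ring

theorem todaProj_sub_s4 : todaProj (A - B) = todaProj A - todaProj B := by
  ext i j
  simp only [todaProj, of_apply, Matrix.sub_apply]
  split_ifs <;> ring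

theorem todaProj_apply_of_lt {i j : Fin n} (h : i < j) : todaProj A i j = A i j := by
  simp [todaProj, h]

theorem transpose_todaProj : (todaProj A)ᵀ = -todaProj A := by
  ext i j
  simp only [transpose_apply, todaProj, of_apply]
  rcases lt_trichotomy i j with h | rfl | h
  · simp [h, h.not_gt]
  · simp
  · simp [h, h.not_gt]

theorem blockTriangular_sub_todaProj : BlockTriangular (A - todaProj A) OrderDual.toDual :=
  fun i j hji => by
    rw [Matrix.sub_apply, todaProj_apply_of_lt A (OrderDual.toDual_lt_toDual.mp hji), sub_self]

variable {A}

theorem todaProj_eq_zero_of_blockTriangular (hA : BlockTriangular A OrderDual.toDual) :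
    todaProj A = 0 := by
  ext i j
  simp only [todaProj, of_apply, Matrix.zero_apply]
  split_ifs with hij hji
  · exact hA (OrderDual.toDual_lt_toDual.mpr hij)
  · rw [hA (OrderDual.toDual_lt_toDual.mpr hji), neg_zero]
  · rfl

theorem todaProj_eq_self_of_transpose_eq_neg (hA : Aᵀ = -A) : todaProj A = A := by
  have hskew : ∀ i j, A j i = -A i j := fun i j => by
    rw [← transpose_apply A i j, hA, neg_apply]
  ext i j
  simp only [todaProj, of_apply]
  rcases lt_trichotomy i j with h | rfl | h
  · simp [h]
  · have := hskew i i
    simp only [lt_irrefl, if_false]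
    linarith
  · simp only [h.not_gt, h, if_false, if_true]
    rw [hskew j i]

end TodaProj

/-- For symmetric matrices `X`, `Y` one has
`⁅X,Y⁆ = M⁅M(X),Y⁆ + M⁅X,M(Y)⁆ - ⁅M(X),M(Y)⁆`, where `⁅A,B⁆ = A*B - B*A` and
`M` is the Toda projection. -/
theorem todaProj_bracket_symmetric {n : ℕ} (X Y : Matrix (Fin n) (Fin n) ℝ)
    (hX : Xᵀ = X) (hY : Yᵀ = Y) :
    X * Y - Y * X =
      todaProj (todaProj X * Y - Y * todaProj X)
        + todaProj (X * todaProj Y - todaProj Y * X)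
        - (todaProj X * todaProj Y - todaProj Y * todaProj X) := by
  set P := todaProj X
  set Q := todaProj Y
  have hPQ : todaProj (P * Q - Q * P) = P * Q - Q * P :=
    todaProj_eq_self_of_transpose_eq_neg <|
      transpose_commutator_of_transpose_eq_neg (transpose_todaProj X) (transpose_todaProj Y)
  have hlower : todaProj ((X - P) * (Y - Q) - (Y - Q) * (X - P)) = 0 := by
    have hXP := blockTriangular_sub_todaProj X
    have hYQ := blockTriangular_sub_todaProj Y
    exact todaProj_eq_zero_of_blockTriangular ((hXP.mul hYQ).sub (hYQ.mul hXP))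
  calc X * Y - Y * X = todaProj (X * Y - Y * X) :=
        (todaProj_eq_self_of_transpose_eq_neg
          (transpose_commutator_of_transpose_eq_self hX hY)).symm
    _ = todaProj ((P * Y - Y * P) + (X * Q - Q * X) - (P * Q - Q * P)
          + ((X - P) * (Y - Q) - (Y - Q) * (X - P))) := by
        congr 1
        noncomm_ring
    _ = todaProj (P * Y - Y * P) + todaProj (X * Q - Q * X) - (P * Q - Q * P) := by
        rw [todaProj_add_s4, todaProj_sub_s4, todaProj_add_s4, hPQ, hlower, add_zero]
end

section
/- For an n×n real matrix X, define the generalized Toda vector field T^X on the space of n×n real matrices by T^X(g) = M(g·X·g⁻¹)·g, where g⁻¹ is Ring.inverse g and M is the projection onto skew-symmetric matrices along lower triangular matrices. Then for all n×n real matrices X, Y and every invertible g, the pointwise Lie bracket of vector fields satisfies (lieBracket T^X T^Y)(g) = T^{⁅X,Y⁆}(g), where ⁅X,Y⁆ = XY − YX. In other words, X ↦ T^X is a representation of gl_n(ℝ) by vector fields on the group of invertible matrices. -/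
open Matrix VectorField

attribute [local instance] Matrix.normedAddCommGroup Matrix.normedSpace

/-- The generalized Toda vector field `𝒯^X(g) = M(g·X·g⁻¹)·g` on the space of `n×n`
real matrices. -/
noncomputable def todaField {n : ℕ} (X : Matrix (Fin n) (Fin n) ℝ) :
    Matrix (Fin n) (Fin n) ℝ → Matrix (Fin n) (Fin n) ℝ :=
  fun g => todaProj (g * X * Ring.inverse g) * g

/-
Put `A = g X g⁻¹` and `B = g Y g⁻¹`. Differentiating `𝒯^Y(g) = M(g Y g⁻¹) g` in the direction
`𝒯^X(g) = M(A) g` gives `(M⁅M A, B⁆ + M B · M A) g`, so the bracket is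
`(M⁅M A, B⁆ + M⁅A, M B⁆ - ⁅M A, M B⁆) g`. Now `M` is the projection of `gl_n` onto the skew-symmetric
matrices along the lower triangular ones, and both are Lie subalgebras; for such a projection the
bracket expression collapses to `M⁅A, B⁆`, and `M⁅A, B⁆ g = 𝒯^{⁅X,Y⁆}(g)`.
-/

theorem proj_lie_add_lie_proj {L : Type*} [LieRing L] (P : L →+ L) (hP : ∀ a, P (P a) = P a)
    (hrange : ∀ a b, P a = a → P b = b → P ⁅a, b⁆ = ⁅a, b⁆)
    (hker : ∀ a b, P a = 0 → P b = 0 → P ⁅a, b⁆ = 0) (a b : L) :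
    P ⁅P a, b⁆ + P ⁅a, P b⁆ - ⁅P a, P b⁆ = P ⁅a, b⁆ := by
  have hsplit : ∀ x, P (x - P x) = 0 := fun x => by rw [map_sub, hP, sub_self]
  have hdecomp : ∀ a₁ a₂ b₁ b₂ : L, P a₁ = a₁ → P a₂ = 0 → P b₁ = b₁ → P b₂ = 0 →
      P ⁅a₁, b₁ + b₂⁆ + P ⁅a₁ + a₂, b₁⁆ - ⁅a₁, b₁⁆ = P ⁅a₁ + a₂, b₁ + b₂⁆ := by
    intro a₁ a₂ b₁ b₂ ha₁ ha₂ hb₁ hb₂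
    simp only [lie_add, add_lie, map_add, hrange _ _ ha₁ hb₁, hker _ _ ha₂ hb₂]
    abel
  simpa using hdecomp (P a) (a - P a) (P b) (b - P b) (hP a) (hsplit a) (hP b) (hsplit b)

theorem ContinuousLinearEquiv.lieBracket_comp_comp_symm {𝕜 E F : Type*}
    [NontriviallyNormedField 𝕜] [NormedAddCommGroup E] [NormedSpace 𝕜 E] [NormedAddCommGroup F]
    [NormedSpace 𝕜 F] (e : E ≃L[𝕜] F) (V W : E → E) (x : E) :
    lieBracket 𝕜 (e ∘ V ∘ e.symm) (e ∘ W ∘ e.symm) (e x) = e (lieBracket 𝕜 V W x) := by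
  simp [lieBracket, e.comp_fderiv, e.symm.comp_right_fderiv]

section NormedAlgebra

variable {𝕜 R : Type*} [NontriviallyNormedField 𝕜] [NormedRing R] [NormedAlgebra 𝕜 R]
  [HasSummableGeomSeries R]

noncomputable def conjProjField (P : R →L[𝕜] R) (X g : R) : R := P (g * X * Ring.inverse g) * g

theorem fderiv_conjProjField_apply (P : R →L[𝕜] R) (X : R) {g : R} (hg : IsUnit g) (v : R) :
    fderiv 𝕜 (conjProjField P X) g v =
      P (v * X * Ring.inverse g - g * X * Ring.inverse g * v * Ring.inverse g) * g
        + P (g * X * Ring.inverse g) * v := by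
  obtain ⟨u, rfl⟩ := hg
  have hconj := ((hasFDerivAt_id (𝕜 := 𝕜) (u : R)).mul_const' X).mul'
    (hasFDerivAt_ringInverse (𝕜 := 𝕜) u)
  have hfield : HasFDerivAt (conjProjField P X) _ (u : R) :=
    (P.hasFDerivAt.comp (u : R) hconj).mul' (hasFDerivAt_id (u : R))
  rw [hfield.fderiv]
  simp only [Function.comp_apply, Pi.mul_apply, id_eq, Ring.inverse_invertible, invOf_units,
    ContinuousLinearMap.comp_add, ContinuousLinearMap.comp_neg, ContinuousLinearMap.comp_apply,
    ContinuousLinearMap.id_apply, ContinuousLinearMap.mulLeftRight_apply, _root_.add_apply,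
    _root_.smul_apply, _root_.neg_apply, smul_add, smul_neg, smul_eq_mul,
    MulOpposite.smul_eq_mul_unop, MulOpposite.unop_op, mul_assoc, map_sub, sub_mul]
  abel

theorem lieBracket_conjProjField (P : R →L[𝕜] R)
    (hP : ∀ a b, P ⁅P a, b⁆ + P ⁅a, P b⁆ - ⁅P a, P b⁆ = P ⁅a, b⁆) (X Y : R) {g : R}
    (hg : IsUnit g) :
    lieBracket 𝕜 (conjProjField P X) (conjProjField P Y) g = conjProjField P ⁅X, Y⁆ g := by
  rw [lieBracket, fderiv_conjProjField_apply P Y hg, fderiv_conjProjField_apply P X hg]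
  obtain ⟨u, rfl⟩ := hg
  set A := (u : R) * X * ↑u⁻¹
  set B := (u : R) * Y * ↑u⁻¹
  have hconj : (u : R) * ⁅X, Y⁆ * ↑u⁻¹ = ⁅A, B⁆ := by
    simp only [A, B, Ring.lie_def, mul_sub, sub_mul, mul_assoc, Units.inv_mul_cancel_left]
  calc _ = (P ⁅P A, B⁆ + P ⁅A, P B⁆ - ⁅P A, P B⁆) * u := by
        simp only [conjProjField, Ring.inverse_unit, Ring.lie_def, map_sub, add_mul, sub_mul,
          mul_assoc, Units.mul_inv, mul_one, A, B]
        abel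
    _ = conjProjField P ⁅X, Y⁆ u := by rw [hP, conjProjField, Ring.inverse_unit, hconj]

end NormedAlgebra

section Toda

variable {n : ℕ}

theorem todaProj_transpose (A : Matrix (Fin n) (Fin n) ℝ) : (todaProj A)ᵀ = -todaProj A := by
  ext i j
  simp only [todaProj, transpose_apply, Matrix.neg_apply, of_apply]
  rcases lt_trichotomy i j with h | rfl | h
  · simp [h, h.not_gt]
  · simp
  · simp [h, h.not_gt]

theorem todaProj_of_transpose_eq_neg {A : Matrix (Fin n) (Fin n) ℝ} (hA : Aᵀ = -A) :
    todaProj A = A := by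
  ext i j
  have hji : A j i = -A i j := by simpa using congrFun (congrFun hA i) j
  simp only [todaProj, of_apply]
  rcases lt_trichotomy i j with h | rfl | h
  · simp [h]
  · simp only [lt_irrefl, if_false]
    linarith
  · simp [h, h.not_gt, hji]

theorem todaProj_eq_zero_iff {A : Matrix (Fin n) (Fin n) ℝ} :
    todaProj A = 0 ↔ A.IsLowerTriangular := by
  constructor
  · intro h i j hij
    rw [OrderDual.toDual_lt_toDual] at hij
    simpa [todaProj, hij] using congrFun (congrFun h i) j
  · intro h
    ext i j
    simp only [todaProj, of_apply, Matrix.zero_apply]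
    split_ifs with hij hji
    · exact h hij
    · rw [h hji, neg_zero]
    · rfl

def todaProjₗ : Matrix (Fin n) (Fin n) ℝ →ₗ[ℝ] Matrix (Fin n) (Fin n) ℝ where
  toFun := todaProj
  map_add' A B := by
    ext i j
    simp only [todaProj, of_apply, Matrix.add_apply]
    split_ifs <;> ring
  map_smul' c A := by
    ext i j
    simp only [todaProj, of_apply, Matrix.smul_apply, smul_eq_mul, RingHom.id_apply]
    split_ifs <;> ring

attribute [local instance] LieRing.ofAssociativeRing

theorem todaProj_lie_add_lie_todaProj (A B : Matrix (Fin n) (Fin n) ℝ) :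
    todaProj ⁅todaProj A, B⁆ + todaProj ⁅A, todaProj B⁆ - ⁅todaProj A, todaProj B⁆ =
      todaProj ⁅A, B⁆ := by
  refine proj_lie_add_lie_proj todaProjₗ.toAddMonoidHom
    (fun A => todaProj_of_transpose_eq_neg (todaProj_transpose A)) (fun a b ha hb => ?_)
    (fun a b ha hb => ?_) A B
  · have ha' : aᵀ = -a := ha ▸ todaProj_transpose a
    have hb' : bᵀ = -b := hb ▸ todaProj_transpose b
    refine todaProj_of_transpose_eq_neg ?_
    rw [Matrix.lie_transpose, ha', hb', neg_lie, lie_neg, neg_neg, ← lie_skew]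
  · have ha' := todaProj_eq_zero_iff.mp ha
    have hb' := todaProj_eq_zero_iff.mp hb
    exact todaProj_eq_zero_iff.mpr ((ha'.mul hb').sub (hb'.mul ha'))

/-- The sup norm on matrices is not submultiplicative; the `ℓ∞` operator norm is, and it makes
matrices a complete normed algebra, where the derivative of `Ring.inverse` is available. -/
def LinftyOpMatrix (n : ℕ) := Matrix (Fin n) (Fin n) ℝ

noncomputable instance : NormedRing (LinftyOpMatrix n) := Matrix.linftyOpNormedRing

noncomputable instance : NormedAlgebra ℝ (LinftyOpMatrix n) := Matrix.linftyOpNormedAlgebra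

instance : FiniteDimensional ℝ (LinftyOpMatrix n) :=
  inferInstanceAs (FiniteDimensional ℝ (Matrix (Fin n) (Fin n) ℝ))

instance : CompleteSpace (LinftyOpMatrix n) := FiniteDimensional.complete ℝ _

noncomputable def toLinftyOpMatrix : Matrix (Fin n) (Fin n) ℝ ≃L[ℝ] LinftyOpMatrix n :=
  (LinearEquiv.refl ℝ (Matrix (Fin n) (Fin n) ℝ)).toContinuousLinearEquiv

noncomputable def todaProjCLM : LinftyOpMatrix n →L[ℝ] LinftyOpMatrix n :=
  LinearMap.toContinuousLinearMap (todaProjₗ : Matrix (Fin n) (Fin n) ℝ →ₗ[ℝ] _)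

end Toda

/-- `X ↦ 𝒯^X` is a representation of `gl_n(ℝ)` by vector fields on the group of
invertible matrices: `[𝒯^X, 𝒯^Y](g) = 𝒯^{⁅X,Y⁆}(g)` at every invertible `g`. -/
theorem lieBracket_todaField {n : ℕ}
    (X Y : Matrix (Fin n) (Fin n) ℝ) (g : Matrix (Fin n) (Fin n) ℝ) (hg : IsUnit g) :
    lieBracket ℝ (todaField X) (todaField Y) g = todaField (X * Y - Y * X) g := by
  apply toLinftyOpMatrix.injective
  calc toLinftyOpMatrix (lieBracket ℝ (todaField X) (todaField Y) g)
      = lieBracket ℝ (conjProjField todaProjCLM (toLinftyOpMatrix X))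
          (conjProjField todaProjCLM (toLinftyOpMatrix Y)) (toLinftyOpMatrix g) :=
        (toLinftyOpMatrix.lieBracket_comp_comp_symm _ _ _).symm
    _ = conjProjField todaProjCLM ⁅toLinftyOpMatrix X, toLinftyOpMatrix Y⁆ (toLinftyOpMatrix g) :=
        lieBracket_conjProjField _ todaProj_lie_add_lie_todaProj _ _ hg
    _ = toLinftyOpMatrix (todaField (X * Y - Y * X) g) := rfl
end

section
/- Let L : ℝ → Matrix (Fin n) (Fin n) ℝ be a solution of the full symmetric Toda equation: for every t, L'(t) = ⁅M(L(t)), L(t)⁆ (in the sense of HasDerivAt). Then for every natural number m, the Flaschka integral t ↦ trace((L(t))^m) is constant: trace((L(t))^m) = trace((L(0))^m) for all t. -/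
open Matrix

attribute [local instance] Matrix.normedAddCommGroup Matrix.normedSpace

/-!
The Toda equation is a Lax equation `L' = ⁅P, L⁆`. Since `ad P` is a derivation, every power
satisfies `(L ^ m)' = ⁅P, L ^ m⁆`, and the trace of a commutator vanishes, so
`t ↦ trace (L t ^ m)` has derivative zero everywhere.
-/

section MatrixCalculus

variable {𝕜 : Type*} [NontriviallyNormedField 𝕜] {R : Type*} [NormedRing R] [NormedAlgebra 𝕜 R]
  {l m n : Type*} [Fintype m] [Fintype n] {x : 𝕜}

theorem HasDerivAt.matrix_mul {A : 𝕜 → Matrix l m R} {B : 𝕜 → Matrix m n R}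
    {A' : Matrix l m R} {B' : Matrix m n R} (hA : HasDerivAt A A' x) (hB : HasDerivAt B B' x) :
    HasDerivAt (fun t => A t * B t) (A' * B x + A x * B') x := by
  refine hasDerivAt_pi.2 fun i => hasDerivAt_pi.2 fun j => ?_
  simp only [Matrix.add_apply, mul_apply, ← Finset.sum_add_distrib]
  exact HasDerivAt.fun_sum fun k _ =>
    ((hasDerivAt_pi.1 (hasDerivAt_pi.1 hA i) k).fun_mul (hasDerivAt_pi.1 (hasDerivAt_pi.1 hB k) j))

theorem HasDerivAt.matrix_trace {A : 𝕜 → Matrix n n R} {A' : Matrix n n R}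
    (hA : HasDerivAt A A' x) : HasDerivAt (fun t => (A t).trace) A'.trace x :=
  HasDerivAt.fun_sum fun i _ => hasDerivAt_pi.1 (hasDerivAt_pi.1 hA i) i

theorem HasDerivAt.matrix_pow_of_lax [DecidableEq n] {L : 𝕜 → Matrix n n R} {P : Matrix n n R}
    (hL : HasDerivAt L ⁅P, L x⁆ x) (k : ℕ) : HasDerivAt (fun t => L t ^ k) ⁅P, L x ^ k⁆ x := by
  induction k with
  | zero =>
    simp only [pow_zero, Ring.lie_def, mul_one, one_mul, sub_self]
    exact hasDerivAt_const x 1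
  | succ k ih =>
    simp only [pow_succ']
    convert hL.matrix_mul ih using 1
    simp only [Ring.lie_def]
    noncomm_ring

end MatrixCalculus

theorem trace_pow_eq_of_lax {𝕜 : Type*} [RCLike 𝕜] {R : Type*} [NormedCommRing R]
    [NormedAlgebra 𝕜 R] {n : Type*} [Fintype n] [DecidableEq n] {L P : 𝕜 → Matrix n n R}
    (hL : ∀ t, HasDerivAt L ⁅P t, L t⁆ t) (k : ℕ) (s t : 𝕜) :
    (L s ^ k).trace = (L t ^ k).trace := by
  have hderiv (u : 𝕜) : HasDerivAt (fun t => (L t ^ k).trace) 0 u := by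
    simpa only [LieAlgebra.matrix_trace_commutator_zero] using ((hL u).matrix_pow_of_lax k).matrix_trace
  exact is_const_of_deriv_eq_zero (fun u => (hderiv u).differentiableAt) (fun u => (hderiv u).deriv)
    s t

/-- Along any solution of the full symmetric Toda equation `L' = ⁅M(L), L⁆`, each
Flaschka integral `t ↦ trace((L(t))^m)` is constant. -/
theorem flaschka_integrals_constant {n : ℕ} (L : ℝ → Matrix (Fin n) (Fin n) ℝ)
    (hL : ∀ t, HasDerivAt L (todaProj (L t) * L t - L t * todaProj (L t)) t) :
    ∀ (m : ℕ) (t : ℝ), ((L t) ^ m).trace = ((L 0) ^ m).trace := fun m t =>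
  trace_pow_eq_of_lax (P := fun t => todaProj (L t)) (fun t => by simpa only [Ring.lie_def] using hL t)
    m t 0
end

section
/- Let Λ = diag(λ₁,…,λ_n) be a diagonal real matrix and let k : ℝ → Matrix (Fin n) (Fin n) ℝ satisfy, for every t, k'(t) = M(k(t)·Λ·k(t)ᵀ)·k(t) and the orthogonality condition k(t)ᵀ·k(t) = 1. Write L(t) = k(t)·Λ·k(t)ᵀ. Then each entry of the first row of k is a semiinvariant of the Toda flow: for every column index i and every t, the function t ↦ k(t)_{1i} satisfies (k(t)_{1i})′ = (λ_i − L(t)_{11})·k(t)_{1i} (rows and columns of an n×n matrix are indexed by Fin n, with '1' denoting the first index, i.e. index 0). -/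
/-! The first row of `M(L)` is the first row of `L` with `L₀₀` removed, so
`(k')₀ᵢ = (L k)₀ᵢ - L₀₀ k₀ᵢ`; orthogonality gives `L k = k Λ`, whence `(L k)₀ᵢ = λᵢ k₀ᵢ`. -/

open Matrix

attribute [local instance] Matrix.normedAddCommGroup Matrix.normedSpace

lemma todaProj_apply_zero_left {n : ℕ} (A : Matrix (Fin (n + 1)) (Fin (n + 1)) ℝ)
    (j : Fin (n + 1)) : todaProj A 0 j = A 0 j - if j = 0 then A 0 0 else 0 := by
  rcases eq_or_ne j 0 with rfl | hj
  · simp [todaProj]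
  · simp [todaProj, hj, Fin.pos_iff_ne_zero]

lemma todaProj_mul_apply_zero_left {n : ℕ} (A B : Matrix (Fin (n + 1)) (Fin (n + 1)) ℝ)
    (j : Fin (n + 1)) : (todaProj A * B) 0 j = (A * B) 0 j - A 0 0 * B 0 j := by
  simp only [mul_apply, todaProj_apply_zero_left, sub_mul, Finset.sum_sub_distrib, ite_mul,
    zero_mul, Finset.sum_ite_eq', Finset.mem_univ, if_true]

/-- Each entry of the first row of an orthogonal solution `k(t)` of
`k' = M(k·Λ·kᵀ)·k` with `Λ = diag(λ)` is a semiinvariant of the Toda flow: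
`(k_{1i})′ = (λ_i − L_{11})·k_{1i}` where `L = k·Λ·kᵀ` and `1` denotes the first
index (index `0` of `Fin (n+1)`). -/
theorem first_row_semiinvariant {n : ℕ} (lam : Fin (n + 1) → ℝ)
    (k : ℝ → Matrix (Fin (n + 1)) (Fin (n + 1)) ℝ)
    (hk : ∀ t, HasDerivAt k
      (todaProj (k t * Matrix.diagonal lam * (k t)ᵀ) * k t) t)
    (horth : ∀ t, (k t)ᵀ * k t = 1) :
    ∀ (i : Fin (n + 1)) (t : ℝ),
      HasDerivAt (fun t => k t 0 i)
        ((lam i - (k t * Matrix.diagonal lam * (k t)ᵀ) 0 0) * k t 0 i) t := by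
  intro i t
  have hLk : k t * diagonal lam * (k t)ᵀ * k t = k t * diagonal lam := by
    rw [Matrix.mul_assoc _ (k t)ᵀ, horth t, Matrix.mul_one]
  have hentry := hasDerivAt_pi.1 (hasDerivAt_pi.1 (hk t) 0) i
  rwa [todaProj_mul_apply_zero_left, hLk, mul_diagonal, mul_comm (k t 0 i), ← sub_mul] at hentry
end

section
/- Let Λ = diag(λ₁,…,λ_n) be a diagonal real matrix and let k : ℝ → Matrix (Fin n) (Fin n) ℝ satisfy, for every t, k'(t) = M(k(t)·Λ·k(t)ᵀ)·k(t) and k(t)ᵀ·k(t) = 1. Write L(t) = k(t)·Λ·k(t)ᵀ. Then each entry of the last row of k is a semiinvariant of the Toda flow: for every column index i and every t, the function t ↦ k(t)_{ni} satisfies (k(t)_{ni})′ = (L(t)_{nn} − λ_i)·k(t)_{ni}, where n denotes the last row index. -/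
/-! On the last row nothing lies above the diagonal, so by symmetry of `L` the last row
of `M(L)` is `-L` off the diagonal. For `L = kΛkᵀ` with `k` orthogonal, `Lk = kΛ`, and
the last row of `M(L)k` collapses to `L_{nn} k_{ni} - λ_i k_{ni}`. -/

open Matrix

attribute [local instance] Matrix.normedAddCommGroup Matrix.normedSpace

theorem Matrix.IsSymm.mul_mul_transpose {ι R : Type*} [Fintype ι] [CommSemiring R]
    {D : Matrix ι ι R} (hD : D.IsSymm) (A : Matrix ι ι R) : (A * D * Aᵀ).IsSymm := by
  rw [IsSymm, transpose_mul, transpose_mul, transpose_transpose, hD.eq, Matrix.mul_assoc]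

theorem todaProj_last_row {n : ℕ} {A : Matrix (Fin (n + 1)) (Fin (n + 1)) ℝ} (hA : A.IsSymm) :
    todaProj A (Fin.last n) =
      Pi.single (Fin.last n) (A (Fin.last n) (Fin.last n)) - A (Fin.last n) := by
  ext j
  rcases (Fin.le_last j).lt_or_eq with hj | rfl
  · simp [todaProj, hj, hj.ne, not_lt.2 hj.le, hA.apply]
  · simp [todaProj]

theorem todaProj_mul_apply_last {n : ℕ} {A : Matrix (Fin (n + 1)) (Fin (n + 1)) ℝ}
    (hA : A.IsSymm) (B : Matrix (Fin (n + 1)) (Fin (n + 1)) ℝ) (i : Fin (n + 1)) :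
    (todaProj A * B) (Fin.last n) i =
      A (Fin.last n) (Fin.last n) * B (Fin.last n) i - (A * B) (Fin.last n) i := by
  rw [mul_apply', mul_apply', todaProj_last_row hA, sub_dotProduct, single_dotProduct]

theorem mul_mul_transpose_mul_of_transpose_mul_self {ι R : Type*} [Fintype ι] [DecidableEq ι]
    [Semiring R] {k : Matrix ι ι R} (hk : kᵀ * k = 1) (D : Matrix ι ι R) :
    k * D * kᵀ * k = k * D := by
  rw [Matrix.mul_assoc, hk, Matrix.mul_one]

/-- Each entry of the last row of an orthogonal solution `k(t)` of
`k' = M(k·Λ·kᵀ)·k` with `Λ = diag(λ)` is a semiinvariant of the Toda flow: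
`(k_{ni})′ = (L_{nn} − λ_i)·k_{ni}` where `L = k·Λ·kᵀ` and `n` denotes the last
index (`Fin.last n`). -/
theorem last_row_semiinvariant {n : ℕ} (lam : Fin (n + 1) → ℝ)
    (k : ℝ → Matrix (Fin (n + 1)) (Fin (n + 1)) ℝ)
    (hk : ∀ t, HasDerivAt k
      (todaProj (k t * Matrix.diagonal lam * (k t)ᵀ) * k t) t)
    (horth : ∀ t, (k t)ᵀ * k t = 1) :
    ∀ (i : Fin (n + 1)) (t : ℝ),
      HasDerivAt (fun t => k t (Fin.last n) i)
        (((k t * Matrix.diagonal lam * (k t)ᵀ) (Fin.last n) (Fin.last n) - lam i)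
          * k t (Fin.last n) i) t := by
  intro i t
  have hentry := hasDerivAt_pi.1 (hasDerivAt_pi.1 (hk t) (Fin.last n)) i
  have hL : (k t * diagonal lam * (k t)ᵀ).IsSymm := (isSymm_diagonal lam).mul_mul_transpose (k t)
  rw [todaProj_mul_apply_last hL, mul_mul_transpose_mul_of_transpose_mul_self (horth t),
    mul_diagonal] at hentry
  exact hentry.congr_deriv (by ring)
end

section
/- Let Λ = diag(λ₁,…,λ_n) be a diagonal real matrix and let k : ℝ → Matrix (Fin n) (Fin n) ℝ satisfy, for every t, k'(t) = M(k(t)·Λ·k(t)ᵀ)·k(t) and k(t)ᵀ·k(t) = 1. Fix column indices i, j and assume k(t)_{1j} ≠ 0 for all t (entries of the first row, i.e. row index 0). Then the ratio F(t) = k(t)_{1i}/k(t)_{1j} satisfies F′(t) = (λ_i − λ_j)·F(t) for all t; i.e., F is a semiinvariant of the Toda flow whose exponent is the value on Λ of the root ω_i − ω_j. -/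
open Matrix

attribute [local instance] Matrix.normedAddCommGroup Matrix.normedSpace

lemma key_entry {n : ℕ} (lam : Fin (n + 1) → ℝ) (K : Matrix (Fin (n + 1)) (Fin (n + 1)) ℝ)
    (horth : Kᵀ * K = 1) (b : Fin (n + 1)) :
    (todaProj (K * Matrix.diagonal lam * Kᵀ) * K) 0 b
      = (lam b - ∑ p, lam p * (K 0 p) ^ 2) * K 0 b := by
  set A := K * Matrix.diagonal lam * Kᵀ with hA
  have hAentry : ∀ m : Fin (n + 1), A 0 m = ∑ p, K 0 p * lam p * K m p := by
    intro m
    rw [hA, Matrix.mul_apply]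
    simp [Matrix.mul_diagonal, Matrix.transpose_apply]
  have h1 : (todaProj A * K) 0 b
      = ∑ m, (if (0 : Fin (n + 1)) < m then A 0 m else 0) * K m b := by
    simp only [Matrix.mul_apply, todaProj, Matrix.of_apply]
    refine Finset.sum_congr rfl fun m _ => ?_
    by_cases h : (0 : Fin (n + 1)) < m
    · simp [h]
    · have : ¬ m < 0 := by simp [Fin.pos_iff_ne_zero] at h ⊢
      simp [h, this]
  rw [h1]
  have h2 : ∀ m : Fin (n + 1),
      (if (0 : Fin (n + 1)) < m then A 0 m else 0) * K m b
        = A 0 m * K m b - (if m = 0 then A 0 0 * K 0 b else 0) := by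
    intro m
    rcases eq_or_ne m 0 with h | h
    · subst h; simp
    · simp [Fin.pos_iff_ne_zero.mpr h, h]
  rw [Finset.sum_congr rfl fun m _ => h2 m, Finset.sum_sub_distrib,
    Finset.sum_ite_eq' Finset.univ (0 : Fin (n + 1)) (fun _ => A 0 0 * K 0 b)]
  simp only [Finset.mem_univ, if_true]
  have h3 : ∑ m, A 0 m * K m b = lam b * K 0 b := by
    have : ∑ m, A 0 m * K m b = ∑ p, K 0 p * lam p * ∑ m, K m p * K m b := by
      simp only [hAentry, Finset.sum_mul]
      rw [Finset.sum_comm]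
      refine Finset.sum_congr rfl fun p _ => ?_
      rw [Finset.mul_sum]
      refine Finset.sum_congr rfl fun m _ => ?_
      ring
    rw [this]
    have hKK : ∀ p : Fin (n + 1), (∑ m, K m p * K m b) = if p = b then 1 else 0 := by
      intro p
      have := congrArg (fun M => M p b) horth
      simpa [Matrix.mul_apply, Matrix.transpose_apply, Matrix.one_apply] using this
    simp only [hKK]
    rw [Finset.sum_congr rfl (fun p _ => by rw [mul_ite, mul_one, mul_zero]),
      Finset.sum_ite_eq' Finset.univ b (fun p => K 0 p * lam p)]
    simp [mul_comm]
  have h4 : A 0 0 = ∑ p, lam p * (K 0 p) ^ 2 := by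
    rw [hAentry 0]
    refine Finset.sum_congr rfl fun p _ => by ring
  rw [h3, h4]
  ring

/-- The ratio `F(t) = k(t)_{1i}/k(t)_{1j}` of entries of the first row of an orthogonal
solution `k(t)` of `k' = M(k·Λ·kᵀ)·k`, `Λ = diag(λ)`, is a semiinvariant of the Toda
flow with exponent `λ_i − λ_j`: `F′ = (λ_i − λ_j)·F`. -/
theorem first_row_ratio_semiinvariant {n : ℕ} (lam : Fin (n + 1) → ℝ)
    (k : ℝ → Matrix (Fin (n + 1)) (Fin (n + 1)) ℝ)
    (hk : ∀ t, HasDerivAt k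
      (todaProj (k t * Matrix.diagonal lam * (k t)ᵀ) * k t) t)
    (horth : ∀ t, (k t)ᵀ * k t = 1)
    (i j : Fin (n + 1)) (hj : ∀ t, k t 0 j ≠ 0) :
    ∀ t : ℝ,
      HasDerivAt (fun t => k t 0 i / k t 0 j)
        ((lam i - lam j) * (k t 0 i / k t 0 j)) t := by
  intro t
  have hent : ∀ (b : Fin (n + 1)), HasDerivAt (fun s => k s 0 b)
      ((todaProj (k t * Matrix.diagonal lam * (k t)ᵀ) * k t) 0 b) t := by
    intro b
    exact hasDerivAt_pi.mp (hasDerivAt_pi.mp (hk t) 0) b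
  set c := ∑ p, lam p * (k t 0 p) ^ 2 with hc
  have hi : HasDerivAt (fun s => k s 0 i) ((lam i - c) * k t 0 i) t := by
    have := hent i; rwa [key_entry lam (k t) (horth t) i] at this
  have hjd : HasDerivAt (fun s => k s 0 j) ((lam j - c) * k t 0 j) t := by
    have := hent j; rwa [key_entry lam (k t) (horth t) j] at this
  have hd := hi.div hjd (hj t)
  have hne := hj t
  have hnum : (lam i - c) * k t 0 i * k t 0 j - k t 0 i * ((lam j - c) * k t 0 j)
      = ((lam i - lam j) * k t 0 i) * k t 0 j := by ring
  rw [hnum, sq, mul_div_mul_right _ _ hne, mul_div_assoc] at hd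
  exact hd
end

section
/- Let Λ = diag(λ₁,…,λ_n) be a diagonal real matrix and let k : ℝ → Matrix (Fin n) (Fin n) ℝ be continuous and satisfy, for every t, k'(t) = M(k(t)·Λ·k(t)ᵀ)·k(t) and k(t)ᵀ·k(t) = 1. If for some column index i and some time t₀ the first-row entry vanishes, k(t₀)_{1i} = 0, then k(t)_{1i} = 0 for all t ∈ ℝ. (The zero surfaces of the functions F_i are invariant surfaces of the Toda flow.) -/
/-!
Write `B = k Λ kᵀ`. Orthogonality gives `B k = k Λ`, and in the first row the Toda
projection only deletes the diagonal entry of `B`, so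
`(M(B) k)₁ᵢ = (B k)₁ᵢ - B₁₁ k₁ᵢ = (λᵢ - B₁₁) k₁ᵢ`.
Thus `f = k₁ᵢ` solves the scalar linear equation `f' = (λᵢ - B₁₁) f` with continuous
coefficient, whence `f t = exp (∫_{t₀}^t (λᵢ - B₁₁)) f t₀` vanishes identically.
-/

open Matrix

attribute [local instance] Matrix.normedAddCommGroup Matrix.normedSpace

theorem eq_exp_integral_smul_of_hasDerivAt {E : Type*} [NormedAddCommGroup E]
    [NormedSpace ℝ E] {f : ℝ → E} {g : ℝ → ℝ} (hg : Continuous g)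
    (hf : ∀ t, HasDerivAt f (g t • f t) t) (t₀ t : ℝ) :
    f t = Real.exp (∫ s in t₀..t, g s) • f t₀ := by
  set G : ℝ → ℝ := fun t => ∫ s in t₀..t, g s
  have hG : ∀ t, HasDerivAt G (g t) t := fun t =>
    intervalIntegral.integral_hasDerivAt_right (hg.intervalIntegrable _ _)
      (hg.stronglyMeasurableAtFilter _ _) hg.continuousAt
  have hconst : ∀ t, HasDerivAt (fun t => Real.exp (-G t) • f t) 0 t := fun t => by
    refine (((hG t).neg.exp).smul (hf t)).congr_deriv ?_
    rw [smul_smul, ← add_smul, Pi.neg_apply, mul_neg, add_neg_cancel, zero_smul]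
  have hG₀ : Real.exp (-G t₀) • f t₀ = f t₀ := by
    simp only [G, intervalIntegral.integral_same, neg_zero, Real.exp_zero, one_smul]
  rw [← hG₀, ← is_const_of_deriv_eq_zero (fun t => (hconst t).differentiableAt)
    (fun t => (hconst t).deriv) t t₀, smul_smul, ← Real.exp_add, add_neg_cancel,
    Real.exp_zero, one_smul]

theorem todaProj_mul_apply_zero {n : ℕ} (A C : Matrix (Fin (n + 1)) (Fin (n + 1)) ℝ)
    (j : Fin (n + 1)) : (todaProj A * C) 0 j = (A * C) 0 j - A 0 0 * C 0 j := by
  rw [mul_apply, mul_apply, Fin.sum_univ_succ, Fin.sum_univ_succ]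
  simp [todaProj, Fin.succ_pos]

theorem hasDerivAt_todaFlow_apply_zero {n : ℕ} {lam : Fin (n + 1) → ℝ}
    {k : ℝ → Matrix (Fin (n + 1)) (Fin (n + 1)) ℝ}
    (hk : ∀ t, HasDerivAt k (todaProj (k t * diagonal lam * (k t)ᵀ) * k t) t)
    (horth : ∀ t, (k t)ᵀ * k t = 1) (i : Fin (n + 1)) (t : ℝ) :
    HasDerivAt (fun s => k s 0 i) ((lam i - (k t * diagonal lam * (k t)ᵀ) 0 0) * k t 0 i) t := by
  have hBk : k t * diagonal lam * (k t)ᵀ * k t = k t * diagonal lam := by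
    rw [Matrix.mul_assoc, horth, Matrix.mul_one]
  have hentry := hasDerivAt_pi.1 (hasDerivAt_pi.1 (hk t) 0) i
  rw [todaProj_mul_apply_zero, hBk, mul_diagonal] at hentry
  exact hentry.congr_deriv (by ring)

theorem first_row_zero_invariant_general {n : ℕ} (lam : Fin (n + 1) → ℝ)
    (k : ℝ → Matrix (Fin (n + 1)) (Fin (n + 1)) ℝ)
    (hk : ∀ t, HasDerivAt k
      (todaProj (k t * Matrix.diagonal lam * (k t)ᵀ) * k t) t)
    (horth : ∀ t, (k t)ᵀ * k t = 1)
    (i : Fin (n + 1)) (t₀ : ℝ) (h0 : k t₀ 0 i = 0) :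
    ∀ t : ℝ, k t 0 i = 0 := by
  have hcont : Continuous k := continuous_iff_continuousAt.2 fun t => (hk t).continuousAt
  have hcoeff : Continuous fun t => lam i - (k t * diagonal lam * (k t)ᵀ) 0 0 :=
    continuous_const.sub
      (((hcont.matrix_mul continuous_const).matrix_mul hcont.matrix_transpose).matrix_elem 0 0)
  intro t
  rw [eq_exp_integral_smul_of_hasDerivAt hcoeff (hasDerivAt_todaFlow_apply_zero hk horth i) t₀ t,
    h0, smul_zero]

/-- The zero surfaces of the first-row entries are invariant surfaces of the Toda flow:
if a continuous orthogonal solution `k(t)` of `k' = M(k·Λ·kᵀ)·k`, `Λ = diag(λ)`, has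
`k(t₀)_{1i} = 0` at some time `t₀`, then `k(t)_{1i} = 0` for all `t`. -/
theorem first_row_zero_invariant {n : ℕ} (lam : Fin (n + 1) → ℝ)
    (k : ℝ → Matrix (Fin (n + 1)) (Fin (n + 1)) ℝ)
    (hcont : Continuous k)
    (hk : ∀ t, HasDerivAt k
      (todaProj (k t * Matrix.diagonal lam * (k t)ᵀ) * k t) t)
    (horth : ∀ t, (k t)ᵀ * k t = 1)
    (i : Fin (n + 1)) (t₀ : ℝ) (h0 : k t₀ 0 i = 0) :
    ∀ t : ℝ, k t 0 i = 0 :=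
  first_row_zero_invariant_general lam k hk horth i t₀ h0
end
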